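/- For the warped product g̃ = g ⊕ e^{-2φ/q} g_N (q = m - n) and f ∈ C²(M), the squared norm |∇̃²f - g̃/(2t)|² equals |∇²f - g/(2t)|² + (1/(m-n))·(∇φ·∇f + (m-n)/(2t))². -/

import Mathlib

open Real

/-- Partial derivative of `f : ℝ^ι → ℝ` in the `a`-th coordinate direction. -/
noncomputable def pd {ι : Type*} [Fintype ι] [DecidableEq ι]
    (f : (ι → ℝ) → ℝ) (a : ι) (p : ι → ℝ) : ℝ :=
  fderiv ℝ f p (Pi.single a 1)

/-- Christoffel symbols `Γ^c_{ab}` of a metric `G` given in coordinates. -/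
noncomputable def christoffel {ι : Type*} [Fintype ι] [DecidableEq ι]
    (G : (ι → ℝ) → Matrix ι ι ℝ) (c a b : ι) (p : ι → ℝ) : ℝ :=
  (1 / 2) * ∑ l, (G p)⁻¹ c l *
    (pd (fun z => G z b l) a p + pd (fun z => G z a l) b p - pd (fun z => G z a b) l p)

/-- The Hessian `∇²_{ab} f = ∂_a∂_b f - Γ^c_{ab} ∂_c f` of `f` w.r.t. the metric `G`. -/
noncomputable def hessian {ι : Type*} [Fintype ι] [DecidableEq ι]
    (G : (ι → ℝ) → Matrix ι ι ℝ) (f : (ι → ℝ) → ℝ) (a b : ι) (p : ι → ℝ) : ℝ :=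
  pd (fun z => pd f b z) a p - ∑ c, christoffel G c a b p * pd f c p

/-- Squared norm `|T|²_G = G^{ac} G^{bd} T_{ab} T_{cd}` of a 2-tensor `T` w.r.t. `G`. -/
noncomputable def tensorNormSq {ι : Type*} [Fintype ι] [DecidableEq ι]
    (Gp : Matrix ι ι ℝ) (T : ι → ι → ℝ) : ℝ :=
  ∑ a, ∑ b, ∑ c, ∑ d, Gp⁻¹ a c * Gp⁻¹ b d * T a b * T c d

section helpers
variable {ι κ : Type*} [Fintype ι] [DecidableEq ι] [Fintype κ] [DecidableEq κ]

noncomputable def resL (ι κ : Type*) [Fintype ι] [DecidableEq ι] [Fintype κ] [DecidableEq κ] :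
    ((ι ⊕ κ) → ℝ) →L[ℝ] (ι → ℝ) :=
  ContinuousLinearMap.pi fun i => ContinuousLinearMap.proj (Sum.inl i)

noncomputable def resR (ι κ : Type*) [Fintype ι] [DecidableEq ι] [Fintype κ] [DecidableEq κ] :
    ((ι ⊕ κ) → ℝ) →L[ℝ] (κ → ℝ) :=
  ContinuousLinearMap.pi fun i => ContinuousLinearMap.proj (Sum.inr i)

lemma pd_const (c : ℝ) (a : ι) (p : ι → ℝ) : pd (fun _ => c) a p = 0 := by
  simp [pd]

lemma diff_comp_inl (h : (ι → ℝ) → ℝ) (p : (ι ⊕ κ) → ℝ)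
    (hh : DifferentiableAt ℝ h (p ∘ Sum.inl)) :
    DifferentiableAt ℝ (fun z => h (z ∘ Sum.inl)) p :=
  DifferentiableAt.comp p hh (resL ι κ).differentiableAt

lemma diff_comp_inr (h : (κ → ℝ) → ℝ) (p : (ι ⊕ κ) → ℝ)
    (hh : DifferentiableAt ℝ h (p ∘ Sum.inr)) :
    DifferentiableAt ℝ (fun z => h (z ∘ Sum.inr)) p :=
  DifferentiableAt.comp p hh (resR ι κ).differentiableAt

lemma fderiv_comp_inl (h : (ι → ℝ) → ℝ) (p : (ι ⊕ κ) → ℝ)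
    (hh : DifferentiableAt ℝ h (p ∘ Sum.inl)) :
    fderiv ℝ (fun z => h (z ∘ Sum.inl)) p
      = (fderiv ℝ h (p ∘ Sum.inl)).comp (resL ι κ) := by
  have : (fun z => h (z ∘ Sum.inl)) = h ∘ (resL ι κ) := rfl
  rw [this, fderiv_comp p hh (resL ι κ).differentiableAt, (resL ι κ).fderiv]; rfl

lemma resL_single_inl (i : ι) : (resL ι κ) (Pi.single (Sum.inl i : ι ⊕ κ) 1) = Pi.single i 1 := by
  funext j
  simp [resL, Pi.single_apply, Sum.inl.injEq]

lemma resL_single_inr (α : κ) : (resL ι κ) (Pi.single (Sum.inr α : ι ⊕ κ) 1) = 0 := by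
  funext j
  simp [resL, Pi.single_apply]

lemma pd_comp_inl_inl (h : (ι → ℝ) → ℝ) (p : (ι ⊕ κ) → ℝ)
    (hh : DifferentiableAt ℝ h (p ∘ Sum.inl)) (i : ι) :
    pd (fun z => h (z ∘ Sum.inl)) (Sum.inl i) p = pd h i (p ∘ Sum.inl) := by
  simp [pd, fderiv_comp_inl h p hh, resL_single_inl]

lemma pd_comp_inl_inr (h : (ι → ℝ) → ℝ) (p : (ι ⊕ κ) → ℝ)
    (hh : DifferentiableAt ℝ h (p ∘ Sum.inl)) (α : κ) :
    pd (fun z => h (z ∘ Sum.inl)) (Sum.inr α) p = 0 := by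
  simp [pd, fderiv_comp_inl h p hh, resL_single_inr]

end helpers

-- second helper block
section helpers2
variable {ι κ : Type*} [Fintype ι] [DecidableEq ι] [Fintype κ] [DecidableEq κ]


lemma fderiv_comp_inr (h : (κ → ℝ) → ℝ) (p : (ι ⊕ κ) → ℝ)
    (hh : DifferentiableAt ℝ h (p ∘ Sum.inr)) :
    fderiv ℝ (fun z => h (z ∘ Sum.inr)) p
      = (fderiv ℝ h (p ∘ Sum.inr)).comp (resR ι κ) := by
  have : (fun z => h (z ∘ Sum.inr)) = h ∘ (resR ι κ) := rfl
  rw [this, fderiv_comp p hh (resR ι κ).differentiableAt, (resR ι κ).fderiv]; rfl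

lemma resR_single_inr (α : κ) : (resR ι κ) (Pi.single (Sum.inr α : ι ⊕ κ) 1) = Pi.single α 1 := by
  funext j; simp [resR, Pi.single_apply, Sum.inr.injEq]

lemma resR_single_inl (i : ι) : (resR ι κ) (Pi.single (Sum.inl i : ι ⊕ κ) 1) = 0 := by
  funext j; simp [resR, Pi.single_apply]

lemma pd_comp_inr_inr (h : (κ → ℝ) → ℝ) (p : (ι ⊕ κ) → ℝ)
    (hh : DifferentiableAt ℝ h (p ∘ Sum.inr)) (α : κ) :
    pd (fun z => h (z ∘ Sum.inr)) (Sum.inr α) p = pd h α (p ∘ Sum.inr) := by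
  simp [pd, fderiv_comp_inr h p hh, resR_single_inr]

lemma pd_comp_inr_inl (h : (κ → ℝ) → ℝ) (p : (ι ⊕ κ) → ℝ)
    (hh : DifferentiableAt ℝ h (p ∘ Sum.inr)) (i : ι) :
    pd (fun z => h (z ∘ Sum.inr)) (Sum.inl i) p = 0 := by
  simp [pd, fderiv_comp_inr h p hh, resR_single_inl]

lemma pd_mul (u v : (ι → ℝ) → ℝ) (a : ι) (p : ι → ℝ)
    (hu : DifferentiableAt ℝ u p) (hv : DifferentiableAt ℝ v p) :
    pd (fun x => u x * v x) a p = pd u a p * v p + u p * pd v a p := by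
  simp [pd, fderiv_fun_mul hu hv]; ring

lemma pd_exp (u : (ι → ℝ) → ℝ) (a : ι) (p : ι → ℝ) (hu : DifferentiableAt ℝ u p) :
    pd (fun x => Real.exp (u x)) a p = Real.exp (u p) * pd u a p := by
  simp [pd, fderiv_exp hu]

lemma key_sum {β : Type*} [Fintype β] [DecidableEq β] (B : Matrix β β ℝ)
    (hB : B.IsSymm) (hBu : IsUnit B.det) :
    ∑ a, ∑ b, ∑ c, ∑ d, B⁻¹ a c * B⁻¹ b d * B a b * B c d = Fintype.card β := by
  have hsymm : ∀ i j, B i j = B j i := fun i j => (hB.apply i j).symm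
  have h1 : ∀ b c : β, ∑ d, B⁻¹ b d * B c d = (1 : Matrix β β ℝ) b c := by
    intro b c
    have : ∀ d, B⁻¹ b d * B c d = B⁻¹ b d * B d c := fun d => by rw [hsymm c d]
    rw [Finset.sum_congr rfl fun d _ => this d, ← Matrix.mul_apply,
      Matrix.nonsing_inv_mul B hBu]
  have h2 : ∀ a b : β, ∑ c, ∑ d, B⁻¹ a c * B⁻¹ b d * B a b * B c d
      = B⁻¹ a b * B a b := by
    intro a b
    have : ∀ c, ∑ d, B⁻¹ a c * B⁻¹ b d * B a b * B c d
        = B⁻¹ a c * B a b * ((1 : Matrix β β ℝ) b c) := by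
      intro c
      rw [← h1 b c, Finset.mul_sum]
      exact Finset.sum_congr rfl fun d _ => by ring
    rw [Finset.sum_congr rfl fun c _ => this c]
    simp [Matrix.one_apply, Finset.sum_ite_eq, mul_ite]
  calc ∑ a, ∑ b, ∑ c, ∑ d, B⁻¹ a c * B⁻¹ b d * B a b * B c d
      = ∑ a, ∑ b, B⁻¹ a b * B a b := by
        exact Finset.sum_congr rfl fun a _ => Finset.sum_congr rfl fun b _ => h2 a b
    _ = ∑ a, ∑ b, B⁻¹ a b * B b a := by
        exact Finset.sum_congr rfl fun a _ => Finset.sum_congr rfl fun b _ => by rw [hsymm a b]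
    _ = ∑ a : β, (1 : Matrix β β ℝ) a a := by
        exact Finset.sum_congr rfl fun a _ => by rw [← Matrix.mul_apply, Matrix.nonsing_inv_mul B hBu]
    _ = Fintype.card β := by simp [Matrix.one_apply]
end helpers2

/-- for the warped product `g̃ = g ⊕ e^{-2φ/q} g_N` (`q = m - n ≥ 1`) and
`f ∈ C²(M)` lifted to `M̃`, `|∇̃²f - g̃/(2t)|² = |∇²f - g/(2t)|² + (1/(m-n))(∇φ·∇f + (m-n)/(2t))²`. -/
theorem warped_hessian_norm_split (m n : ℕ) (hmn : n < m) (t : ℝ) (ht : 0 < t)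
    (gM : (Fin n → ℝ) → Matrix (Fin n) (Fin n) ℝ)
    (gN : (Fin (m - n) → ℝ) → Matrix (Fin (m - n)) (Fin (m - n)) ℝ)
    (φ f : (Fin n → ℝ) → ℝ)
    (hgM : ∀ x, (gM x).IsSymm) (hgN : ∀ y, (gN y).IsSymm)
    (hgMd : ∀ i j, ContDiff ℝ (⊤ : ℕ∞) (fun x => gM x i j))
    (hgNd : ∀ α β, ContDiff ℝ (⊤ : ℕ∞) (fun y => gN y α β))
    (hgMinv : ∀ x, IsUnit (gM x).det) (hgNinv : ∀ y, IsUnit (gN y).det)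
    (hφ : ContDiff ℝ (⊤ : ℕ∞) φ) (hf : ContDiff ℝ 2 f)
    (G : ((Fin n ⊕ Fin (m - n)) → ℝ) → Matrix (Fin n ⊕ Fin (m - n)) (Fin n ⊕ Fin (m - n)) ℝ)
    (hG : ∀ p, G p = Matrix.fromBlocks (gM (p ∘ Sum.inl)) 0 0
      (Real.exp (-2 * φ (p ∘ Sum.inl) / ((m : ℝ) - n)) • gN (p ∘ Sum.inr)))
    (F : ((Fin n ⊕ Fin (m - n)) → ℝ) → ℝ) (hF : ∀ p, F p = f (p ∘ Sum.inl))
    (p : (Fin n ⊕ Fin (m - n)) → ℝ) :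
    tensorNormSq (G p) (fun a b => hessian G F a b p - G p a b / (2 * t)) =
      tensorNormSq (gM (p ∘ Sum.inl))
        (fun i j => hessian gM f i j (p ∘ Sum.inl) - gM (p ∘ Sum.inl) i j / (2 * t))
      + (1 / ((m : ℝ) - n)) *
          ((∑ k, ∑ l, (gM (p ∘ Sum.inl))⁻¹ k l * pd φ k (p ∘ Sum.inl) * pd f l (p ∘ Sum.inl))
            + ((m : ℝ) - n) / (2 * t)) ^ 2 := by
  have hq0 : (0:ℝ) < (m:ℝ) - n := sub_pos.2 (by exact_mod_cast hmn)
  have hqne : ((m:ℝ) - n) ≠ 0 := ne_of_gt hq0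
  have htne : t ≠ 0 := ne_of_gt ht
  set x : Fin n → ℝ := p ∘ Sum.inl with hx
  set y : Fin (m - n) → ℝ := p ∘ Sum.inr with hy
  -- differentiability facts
  have hfd : Differentiable ℝ f := hf.differentiable two_ne_zero
  have hφd : Differentiable ℝ φ := hφ.differentiable (by simp)
  have hpdf : ∀ j, Differentiable ℝ (pd f j) := by
    intro j
    have h1 : ContDiff ℝ 1 (fderiv ℝ f) := hf.fderiv_right (le_refl _)
    have h2 := ((ContinuousLinearMap.apply ℝ ℝ ((Pi.single j 1 : (Fin n → ℝ)))).contDiff.comp h1).differentiable one_ne_zero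
    exact h2
  have hgMdiff : ∀ i j, Differentiable ℝ (fun x => gM x i j) :=
    fun i j => (hgMd i j).differentiable (by simp)
  have hgNdiff : ∀ α β, Differentiable ℝ (fun y => gN y α β) :=
    fun α β => (hgNd α β).differentiable (by simp)
  -- warping function
  set E : (Fin n → ℝ) → ℝ := fun x => Real.exp (-2 * φ x / ((m:ℝ) - n)) with hE
  have hEdarg : Differentiable ℝ (fun x : Fin n → ℝ => -2 * φ x / ((m:ℝ) - n)) :=
    by fun_prop
  have hEd : Differentiable ℝ E := hEdarg.exp
  have hpdE : ∀ k x₀, pd E k x₀ = E x₀ * (-2 * pd φ k x₀ / ((m:ℝ) - n)) := by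
    intro k x₀
    have h1 : pd E k x₀ = Real.exp (-2 * φ x₀ / ((m:ℝ) - n)) * pd (fun x => -2 * φ x / ((m:ℝ) - n)) k x₀ :=
      pd_exp _ k x₀ (hEdarg x₀)
    have h2 : pd (fun x => -2 * φ x / ((m:ℝ) - n)) k x₀ = -2 * pd φ k x₀ / ((m:ℝ) - n) := by
      have he : (fun x : Fin n → ℝ => -2 * φ x / ((m:ℝ) - n)) = fun x => (-2 / ((m:ℝ) - n)) * φ x := by
        funext z; ring
      rw [he]
      simp only [pd, fderiv_const_mul (hφd x₀), ContinuousLinearMap.smul_apply, smul_eq_mul]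
      ring
    rw [h1, h2]
  -- inverse of the block metric
  have hGinv : (G p)⁻¹ = Matrix.fromBlocks (gM x)⁻¹ 0 0
      (Real.exp (2 * φ x / ((m:ℝ) - n)) • (gN y)⁻¹) := by
    apply Matrix.inv_eq_right_inv
    rw [hG p]
    rw [Matrix.fromBlocks_multiply]
    have hM : gM x * (gM x)⁻¹ = 1 := Matrix.mul_nonsing_inv _ (hgMinv x)
    have hN : (Real.exp (-2 * φ x / ((m:ℝ) - n)) • gN y) *
        (Real.exp (2 * φ x / ((m:ℝ) - n)) • (gN y)⁻¹) = 1 := by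
      rw [Matrix.smul_mul, Matrix.mul_smul, smul_smul, ← Real.exp_add]
      have he : -2 * φ x / ((m:ℝ) - n) + 2 * φ x / ((m:ℝ) - n) = 0 := by ring
      rw [he, Real.exp_zero, Matrix.mul_nonsing_inv _ (hgNinv y), one_smul]
    rw [hM, hN]
    simp [Matrix.fromBlocks_one]
  -- entry functions of G
  have hG11 : ∀ i j : Fin n, (fun z => G z (Sum.inl i) (Sum.inl j))
      = (fun z => gM (z ∘ Sum.inl) i j) := by
    intro i j; funext z; rw [hG z]; simp [Matrix.fromBlocks_apply₁₁]
  have hG12 : ∀ (i : Fin n) (β : Fin (m-n)), (fun z => G z (Sum.inl i) (Sum.inr β))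
      = (fun _ => (0:ℝ)) := by
    intro i β; funext z; rw [hG z]; simp [Matrix.fromBlocks_apply₁₂]
  have hG21 : ∀ (α : Fin (m-n)) (j : Fin n), (fun z => G z (Sum.inr α) (Sum.inl j))
      = (fun _ => (0:ℝ)) := by
    intro α j; funext z; rw [hG z]; simp [Matrix.fromBlocks_apply₂₁]
  have hG22 : ∀ α β, (fun z => G z (Sum.inr α) (Sum.inr β))
      = (fun z => E (z ∘ Sum.inl) * gN (z ∘ Sum.inr) α β) := by
    intro α β; funext z; rw [hG z]
    simp [Matrix.fromBlocks_apply₂₂, Matrix.smul_apply, smul_eq_mul, hE]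
  -- derivatives of the entries at p
  have hpd11l : ∀ (i j k : Fin n), pd (fun z => gM (z ∘ Sum.inl) i j) (Sum.inl k) p
      = pd (fun x => gM x i j) k x :=
    fun i j k => pd_comp_inl_inl _ p (hgMdiff i j x) k
  have hpd11r : ∀ (i j : Fin n) (γ : Fin (m-n)), pd (fun z => gM (z ∘ Sum.inl) i j) (Sum.inr γ) p = 0 :=
    fun i j γ => pd_comp_inl_inr _ p (hgMdiff i j x) γ
  have hpd22l : ∀ (α β : Fin (m-n)) (k : Fin n),
      pd (fun z => E (z ∘ Sum.inl) * gN (z ∘ Sum.inr) α β) (Sum.inl k) p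
      = (E x * (-2 * pd φ k x / ((m:ℝ) - n))) * gN y α β := by
    intro α β k
    rw [pd_mul _ _ _ _ (diff_comp_inl E p (hEd x)) (diff_comp_inr _ p (hgNdiff α β y))]
    rw [pd_comp_inl_inl E p (hEd x) k, pd_comp_inr_inl _ p (hgNdiff α β y) k, hpdE k]
    simp; rfl
  have hpd22r : ∀ (α β γ : Fin (m-n)),
      pd (fun z => E (z ∘ Sum.inl) * gN (z ∘ Sum.inr) α β) (Sum.inr γ) p
      = E x * pd (fun y => gN y α β) γ y := by
    intro α β γ
    rw [pd_mul _ _ _ _ (diff_comp_inl E p (hEd x)) (diff_comp_inr _ p (hgNdiff α β y))]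
    rw [pd_comp_inl_inr E p (hEd x) γ, pd_comp_inr_inr _ p (hgNdiff α β y) γ]
    simp; rfl
  -- Christoffel symbols with upper index in the M block
  have hΓll : ∀ (k i j : Fin n),
      christoffel G (Sum.inl k) (Sum.inl i) (Sum.inl j) p = christoffel gM k i j x := by
    intro k i j
    unfold christoffel
    rw [hGinv, Fintype.sum_sum_type]
    simp only [hG11, hpd11l, hpd11r, Matrix.fromBlocks_apply₁₁, Matrix.fromBlocks_apply₁₂,
      Matrix.zero_apply, zero_mul, Finset.sum_const_zero, add_zero]
  have hΓlm : ∀ (k i : Fin n) (β : Fin (m-n)),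
      christoffel G (Sum.inl k) (Sum.inl i) (Sum.inr β) p = 0 := by
    intro k i β
    unfold christoffel
    rw [hGinv, Fintype.sum_sum_type]
    simp only [hG11, hG12, hG21, hpd11l, hpd11r, pd_const, Matrix.fromBlocks_apply₁₁,
      Matrix.fromBlocks_apply₁₂, Matrix.zero_apply, zero_mul, mul_zero,
      Finset.sum_const_zero, add_zero, zero_add, sub_zero, zero_sub, neg_zero, mul_zero]
  have hΓml : ∀ (k : Fin n) (α : Fin (m-n)) (j : Fin n),
      christoffel G (Sum.inl k) (Sum.inr α) (Sum.inl j) p = 0 := by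
    intro k α j
    unfold christoffel
    rw [hGinv, Fintype.sum_sum_type]
    simp only [hG11, hG12, hG21, hpd11l, hpd11r, pd_const, Matrix.fromBlocks_apply₁₁,
      Matrix.fromBlocks_apply₁₂, Matrix.zero_apply, zero_mul, mul_zero,
      Finset.sum_const_zero, add_zero, zero_add, sub_zero, zero_sub, neg_zero, mul_zero]
  have hΓmm : ∀ (k : Fin n) (α β : Fin (m-n)),
      christoffel G (Sum.inl k) (Sum.inr α) (Sum.inr β) p
      = (E x * gN y α β / ((m:ℝ) - n)) * ∑ l, (gM x)⁻¹ k l * pd φ l x := by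
    intro k α β
    unfold christoffel
    rw [hGinv, Fintype.sum_sum_type]
    simp only [hG21, hG22, pd_const, hpd22l, Matrix.fromBlocks_apply₁₁,
      Matrix.fromBlocks_apply₁₂, Matrix.zero_apply, zero_mul,
      Finset.sum_const_zero, add_zero, zero_add, zero_sub]
    rw [Finset.mul_sum, Finset.mul_sum]
    exact Finset.sum_congr rfl fun l _ => by ring
  -- partial derivatives of F
  have hFf : F = fun z => f (z ∘ Sum.inl) := funext hF
  have hpdFl : ∀ (z : (Fin n ⊕ Fin (m-n)) → ℝ) (j : Fin n),
      pd F (Sum.inl j) z = pd f j (z ∘ Sum.inl) := by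
    intro z j; rw [hFf]; exact pd_comp_inl_inl f z (hfd _) j
  have hpdFr : ∀ (z : (Fin n ⊕ Fin (m-n)) → ℝ) (γ : Fin (m-n)), pd F (Sum.inr γ) z = 0 := by
    intro z γ; rw [hFf]; exact pd_comp_inl_inr f z (hfd _) γ
  -- Hessian entries
  have hHll : ∀ i j, hessian G F (Sum.inl i) (Sum.inl j) p = hessian gM f i j x := by
    intro i j
    unfold hessian
    have e0 : (fun z => pd F (Sum.inl j) z) = fun z => pd f j (z ∘ Sum.inl) :=
      funext fun z => hpdFl z j
    rw [e0, pd_comp_inl_inl (pd f j) p (hpdf j x) i, Fintype.sum_sum_type]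
    simp only [hpdFr, mul_zero, Finset.sum_const_zero, add_zero, hΓll]
    have e1 : ∀ k : Fin n, pd F (Sum.inl k) p = pd f k x := fun k => hpdFl p k
    simp only [e1]; rfl
  have hHlm : ∀ (i : Fin n) (β : Fin (m-n)), hessian G F (Sum.inl i) (Sum.inr β) p = 0 := by
    intro i β
    unfold hessian
    have e0 : (fun z => pd F (Sum.inr β) z) = fun _ => (0:ℝ) := funext fun z => hpdFr z β
    rw [e0, pd_const, Fintype.sum_sum_type]
    simp only [hpdFr, mul_zero, Finset.sum_const_zero, add_zero, hΓlm, zero_mul]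
    simp
  have hHml : ∀ (α : Fin (m-n)) (j : Fin n), hessian G F (Sum.inr α) (Sum.inl j) p = 0 := by
    intro α j
    unfold hessian
    have e0 : (fun z => pd F (Sum.inl j) z) = fun z => pd f j (z ∘ Sum.inl) :=
      funext fun z => hpdFl z j
    rw [e0, pd_comp_inl_inr (pd f j) p (hpdf j x) α, Fintype.sum_sum_type]
    simp only [hpdFr, mul_zero, Finset.sum_const_zero, add_zero, hΓml, zero_mul]
    simp
  -- symmetry of the inverse metric
  have hsymminv : ∀ k l, (gM x)⁻¹ k l = (gM x)⁻¹ l k := by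
    intro k l
    have h := Matrix.transpose_nonsing_inv (gM x)
    rw [(hgM x).eq] at h
    have cf : ((gM x)⁻¹).transpose k l = (gM x)⁻¹ k l := by rw [h]
    rw [← cf, Matrix.transpose_apply]
  have hHmm : ∀ (α β : Fin (m-n)), hessian G F (Sum.inr α) (Sum.inr β) p
      = -((∑ k, ∑ l, (gM x)⁻¹ k l * pd φ k x * pd f l x) / ((m:ℝ) - n)) * (E x * gN y α β) := by
    intro α β
    unfold hessian
    have e0 : (fun z => pd F (Sum.inr β) z) = fun _ => (0:ℝ) := funext fun z => hpdFr z β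
    rw [e0, pd_const, Fintype.sum_sum_type]
    simp only [hpdFr, mul_zero, Finset.sum_const_zero, add_zero, hΓmm]
    have e1 : ∀ k : Fin n, pd F (Sum.inl k) p = pd f k x := fun k => hpdFl p k
    simp only [e1]
    have key : ∑ k, (E x * gN y α β / ((m:ℝ) - n) * ∑ l, (gM x)⁻¹ k l * pd φ l x) * pd f k x
        = (∑ k, ∑ l, (gM x)⁻¹ k l * pd φ k x * pd f l x)
            * (E x * gN y α β / ((m:ℝ) - n)) := by
      calc ∑ k, (E x * gN y α β / ((m:ℝ) - n) * ∑ l, (gM x)⁻¹ k l * pd φ l x) * pd f k x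
          = ∑ k, ∑ l, (gM x)⁻¹ k l * pd φ l x * pd f k x * (E x * gN y α β / ((m:ℝ) - n)) := by
            refine Finset.sum_congr rfl fun k _ => ?_
            rw [Finset.mul_sum, Finset.sum_mul]
            exact Finset.sum_congr rfl fun l _ => by ring
        _ = ∑ l, ∑ k, (gM x)⁻¹ k l * pd φ l x * pd f k x * (E x * gN y α β / ((m:ℝ) - n)) :=
            Finset.sum_comm
        _ = ∑ k, ∑ l, (gM x)⁻¹ k l * pd φ k x * pd f l x * (E x * gN y α β / ((m:ℝ) - n)) := by
            refine Finset.sum_congr rfl fun k _ => Finset.sum_congr rfl fun l _ => by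
              rw [hsymminv l k]
        _ = (∑ k, ∑ l, (gM x)⁻¹ k l * pd φ k x * pd f l x)
            * (E x * gN y α β / ((m:ℝ) - n)) := by
            rw [Finset.sum_mul]
            exact Finset.sum_congr rfl fun k _ => by rw [Finset.sum_mul]
    rw [zero_sub, key]
    ring
  -- entries of G p and its inverse
  have hGp11 : ∀ i j : Fin n, G p (Sum.inl i) (Sum.inl j) = gM x i j := by
    intro i j; rw [hG p]; rfl
  have hGp12 : ∀ (i : Fin n) (β : Fin (m-n)), G p (Sum.inl i) (Sum.inr β) = 0 := by
    intro i β; rw [hG p]; rfl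
  have hGp21 : ∀ (α : Fin (m-n)) (j : Fin n), G p (Sum.inr α) (Sum.inl j) = 0 := by
    intro α j; rw [hG p]; rfl
  have hGp22 : ∀ α β, G p (Sum.inr α) (Sum.inr β) = E x * gN y α β := by
    intro α β; rw [hG p]
    simp [Matrix.fromBlocks_apply₂₂, Matrix.smul_apply, smul_eq_mul, hE]; rfl
  have hIll : ∀ i j : Fin n, (G p)⁻¹ (Sum.inl i) (Sum.inl j) = (gM x)⁻¹ i j := by
    intro i j; rw [hGinv]; rfl
  have hIlm : ∀ (i : Fin n) (β : Fin (m-n)), (G p)⁻¹ (Sum.inl i) (Sum.inr β) = 0 := by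
    intro i β; rw [hGinv]; rfl
  have hIml : ∀ (α : Fin (m-n)) (j : Fin n), (G p)⁻¹ (Sum.inr α) (Sum.inl j) = 0 := by
    intro α j; rw [hGinv]; rfl
  have hImm : ∀ α β, (G p)⁻¹ (Sum.inr α) (Sum.inr β)
      = Real.exp (2 * φ x / ((m:ℝ) - n)) * (gN y)⁻¹ α β := by
    intro α β; rw [hGinv]
    simp [Matrix.fromBlocks_apply₂₂, Matrix.smul_apply, smul_eq_mul]
  set S : ℝ := ∑ k, ∑ l, (gM x)⁻¹ k l * pd φ k x * pd f l x with hS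
  have hTll : ∀ i j : Fin n,
      hessian G F (Sum.inl i) (Sum.inl j) p - G p (Sum.inl i) (Sum.inl j) / (2*t)
      = hessian gM f i j x - gM x i j / (2*t) := by
    intro i j; rw [hHll i j, hGp11 i j]
  have hTlm : ∀ (i : Fin n) (β : Fin (m-n)),
      hessian G F (Sum.inl i) (Sum.inr β) p - G p (Sum.inl i) (Sum.inr β) / (2*t) = 0 := by
    intro i β; rw [hHlm i β, hGp12 i β]; simp
  have hTml : ∀ (α : Fin (m-n)) (j : Fin n),
      hessian G F (Sum.inr α) (Sum.inl j) p - G p (Sum.inr α) (Sum.inl j) / (2*t) = 0 := by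
    intro α j; rw [hHml α j, hGp21 α j]; simp
  have hTmm : ∀ α β,
      hessian G F (Sum.inr α) (Sum.inr β) p - G p (Sum.inr α) (Sum.inr β) / (2*t)
      = ((-(S / ((m:ℝ) - n)) - 1/(2*t)) * E x) * gN y α β := by
    intro α β; rw [hHmm α β, hGp22 α β]; ring
  unfold tensorNormSq
  simp only [Fintype.sum_sum_type]
  simp only [hTll, hTlm, hTml, hTmm, hIll, hIlm, hIml, hImm, zero_mul, mul_zero,
    add_zero, zero_add, Finset.sum_const_zero]
  congr 1
  have hEE : Real.exp (2 * φ x / ((m:ℝ) - n)) * E x = 1 := by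
    rw [hE, ← Real.exp_add]
    have : 2 * φ x / ((m:ℝ) - n) + -2 * φ x / ((m:ℝ) - n) = 0 := by ring
    rw [this, Real.exp_zero]
  have h2 : ∑ a : Fin (m-n), ∑ b : Fin (m-n), ∑ c : Fin (m-n), ∑ d : Fin (m-n),
      Real.exp (2 * φ x / ((m:ℝ) - n)) * (gN y)⁻¹ a c
        * (Real.exp (2 * φ x / ((m:ℝ) - n)) * (gN y)⁻¹ b d)
        * ((-(S / ((m:ℝ) - n)) - 1 / (2 * t)) * E x * gN y a b)
        * ((-(S / ((m:ℝ) - n)) - 1 / (2 * t)) * E x * gN y c d)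
      = (Real.exp (2 * φ x / ((m:ℝ) - n)) * E x * (-(S / ((m:ℝ) - n)) - 1 / (2 * t)))^2
        * ∑ a, ∑ b, ∑ c, ∑ d, (gN y)⁻¹ a c * (gN y)⁻¹ b d * gN y a b * gN y c d := by
    simp only [Finset.mul_sum]
    exact Finset.sum_congr rfl fun a _ => Finset.sum_congr rfl fun b _ =>
      Finset.sum_congr rfl fun c _ => Finset.sum_congr rfl fun d _ => by ring
  rw [h2, key_sum (gN y) (hgN y) (hgNinv y), hEE]
  rw [Fintype.card_fin, Nat.cast_sub hmn.le]
  field_simp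
  ring
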